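/- Let a, b, c : Fin n → A be pairwise permutation-equivalent words (equal occurrence counts for each letter). Then the canonical permutations satisfy σ_{b,c} ∘ σ_{a,b} = σ_{a,c}. -/
import Mathlib


variable {A : Type*} [DecidableEq A]

/-- The finite set of positions at which the letter `x` occurs in the word `a`. -/
def occFinset {n : ℕ} (a : Fin n → A) (x : A) : Finset (Fin n) :=
  Finset.univ.filter (fun i => a i = x)

/-- The number of occurrences of the letter `x` in the word `a`. -/
def cnt {n : ℕ} (a : Fin n → A) (x : A) : ℕ := (occFinset a x).card

/-- The position of the `j`-th occurrence (in increasing order) of the letter `x`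
in the word `a`. -/
def pos {n : ℕ} (a : Fin n → A) (x : A) (j : Fin (cnt a x)) : Fin n :=
  ((occFinset a x).orderIsoOfFin rfl j : Fin n)

/-- The occurrence index of the position `i` among the increasingly enumerated
occurrences of the letter `a i` in the word `a`. -/
def occ {n : ℕ} (a : Fin n → A) (i : Fin n) : Fin (cnt a (a i)) :=
  ((occFinset a (a i)).orderIsoOfFin rfl).symm ⟨i, by simp [occFinset]⟩

lemma apply_pos {n : ℕ} (a : Fin n → A) (x : A) (j : Fin (cnt a x)) :
    a (pos a x j) = x := by
  have h := ((occFinset a x).orderIsoOfFin rfl j).2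
  simp only [occFinset, Finset.mem_filter] at h
  exact h.2

/-- The canonical permutation `σ_{a,b}` associated with two words having the same
occurrence counts: `σ_{a,b}(i) = pos_{b, a i}(occ_a i)`. -/
def canonPerm {n : ℕ} (a b : Fin n → A) (h : ∀ x, cnt a x = cnt b x) (i : Fin n) : Fin n :=
  pos b (a i) (Fin.cast (h (a i)) (occ a i))

/-- The map induced by a word morphism `φ : a → b` (i.e. `a = b ∘ φ`) on the
occurrence sets of the letter `x`: `⌊φ⌋_x (j) = occ_b (φ (pos_{a,x} j))`. -/
def flr {m n : ℕ} (a : Fin m → A) (b : Fin n → A) (φ : Fin m → Fin n)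
    (hφ : a = b ∘ φ) (x : A) (j : Fin (cnt a x)) : Fin (cnt b x) :=
  Fin.cast (congrArg (cnt b) ((congrFun hφ (pos a x j)).symm.trans (apply_pos a x j)))
    (occ b (φ (pos a x j)))


lemma pos_congr {n : ℕ} (a : Fin n → A) {x x' : A} (hx : x = x')
    {j : Fin (cnt a x)} {j' : Fin (cnt a x')} (hj : (j : ℕ) = (j' : ℕ)) :
    pos a x j = pos a x' j' := by
  subst hx
  exact congrArg _ (Fin.ext hj)

lemma pos_apply_occ {n : ℕ} (a : Fin n → A) (m : Fin n) :
    pos a (a m) (occ a m) = m := by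
  simp [pos, occ]

lemma pos_inj {n : ℕ} (a : Fin n → A) (x : A) {j j' : Fin (cnt a x)}
    (h : pos a x j = pos a x j') : j = j' := by
  have := Subtype.ext (p := (· ∈ occFinset a x)) h
  exact ((occFinset a x).orderIsoOfFin rfl).injective this

lemma occ_pos {n : ℕ} (a : Fin n → A) (x : A) (j : Fin (cnt a x)) :
    ((occ a (pos a x j) : ℕ)) = (j : ℕ) := by
  set m := pos a x j with hm
  have hx : a m = x := apply_pos a x j
  have h1 : pos a x (Fin.cast (congrArg (cnt a) hx) (occ a m)) = m :=
    (pos_congr a hx rfl).symm.trans (pos_apply_occ a m)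
  have := pos_inj a x (h1.trans hm)
  exact congrArg Fin.val this ▸ rfl

/-- For pairwise permutation-equivalent words, `σ_{b,c} ∘ σ_{a,b} = σ_{a,c}`. -/
theorem canonPerm_comp {n : ℕ} (a b c : Fin n → A)
    (hab : ∀ x, cnt a x = cnt b x) (hbc : ∀ x, cnt b x = cnt c x) :
    canonPerm b c hbc ∘ canonPerm a b hab =
      canonPerm a c (fun x => (hab x).trans (hbc x)) := by
  funext i
  simp only [Function.comp, canonPerm]
  set j : Fin (cnt b (a i)) := Fin.cast (hab (a i)) (occ a i) with hj
  set m : Fin n := pos b (a i) j with hm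
  have hx : b m = a i := apply_pos b (a i) j
  refine pos_congr c hx ?_
  exact occ_pos b (a i) _
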